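/- arXiv:1603.09261 — 2 statements merged into one kernel-verified Lean document; each statement's English description precedes it below -/
import Mathlib

section
/- Let K be a field of characteristic different from 2, let n ≥ 3, and let a₁, …, a_n ∈ K×. Let f = a₁ + a₂x₂² + ⋯ + a_n x_n² ∈ K[x₂, …, x_n] and assume that the ideal (f) is prime (this holds automatically since the diagonal quadratic form ⟨a₁, …, a_n⟩ is nondegenerate of rank ≥ 3). Let L be the fraction field of K[x₂, …, x_n]/(f), the function field of the projective quadric {a₁x₁² + ⋯ + a_n x_n² = 0}. Then the natural map K×/K×² → L×/L×² is injective: every u ∈ K× that becomes a square in L is already a square in K. -/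
/-!
If `u` is not a square in `K`, adjoin `ρ = √u`. A diagonal quadratic polynomial in at least two
variables with nonzero coefficients stays irreducible, hence prime, over `K(ρ)`. A square root of
`u` in `L` gives `P, Q` with `f ∤ Q` and `f ∣ P² - uQ² = (P - ρQ)(P + ρQ)`, so over `K(ρ)` the
polynomial `f` divides one of the factors. Applying coefficientwise a `K`-linear functional
`K(ρ) → K` that kills `1` and sends `ρ` to `1` turns this into `f ∣ Q` over `K`.
-/

open Polynomial in
theorem Polynomial.not_isSquare_C_add_C_mul_X_sq {R : Type*} [CommRing R] [IsDomain R]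
    (h2 : (2 : R) ≠ 0) {e₀ e₂ : R} (he₀ : e₀ ≠ 0) (he₂ : e₂ ≠ 0) :
    ¬ IsSquare (C e₀ + C e₂ * X ^ 2) := by
  rintro ⟨s, hs⟩
  have hdeg : s.natDegree = 1 := by
    have := congrArg natDegree hs
    rw [← sq, natDegree_pow, natDegree_C_add, natDegree_C_mul_X_pow 2 _ he₂] at this
    omega
  set c := s.coeff 1
  set b := s.coeff 0
  have hsq : s * s = C (b * b) + C (2 * (c * b)) * X + C (c * c) * X ^ 2 := by
    rw [eq_X_add_C_of_natDegree_le_one hdeg.le]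
    simp only [map_mul, map_ofNat]
    ring
  rw [hsq] at hs
  have hcoeff (k : ℕ) := congrArg (coeff · k) hs
  simp only [coeff_add, coeff_C, coeff_C_mul, coeff_X_pow, coeff_X] at hcoeff
  have hb : b ≠ 0 := by rintro hb; simpa [hb, he₀] using hcoeff 0
  have hc : c ≠ 0 := by rintro hc; simpa [hc, he₂] using hcoeff 2
  simpa [h2, hb, hc] using hcoeff 1

namespace MvPolynomial

section CommSemiring

variable {R S : Type*} [CommSemiring R] [CommSemiring S] {n : ℕ}

noncomputable def diagQuadratic (a : Fin (n + 1) → R) : MvPolynomial (Fin n) R :=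
  C (a 0) + ∑ i : Fin n, C (a i.succ) * X i ^ 2

theorem map_diagQuadratic (φ : R →+* S) (a : Fin (n + 1) → R) :
    map φ (diagQuadratic a) = diagQuadratic (φ ∘ a) := by
  simp [diagQuadratic]

theorem C_mul_diagQuadratic (c : R) (a : Fin (n + 1) → R) :
    C c * diagQuadratic a = diagQuadratic (c • a) := by
  simp [diagQuadratic, mul_add, Finset.mul_sum, mul_assoc]

theorem finSuccEquiv_diagQuadratic (a : Fin (n + 2) → R) :
    finSuccEquiv R n (diagQuadratic a) = Polynomial.C (C (a 1)) * Polynomial.X ^ 2 +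
      Polynomial.C (diagQuadratic (Fin.cons (a 0) fun j : Fin n => a j.succ.succ)) := by
  simp only [diagQuadratic, Fin.sum_univ_succ, Fin.succ_zero_eq_one, finSuccEquiv_apply,
    coe_eval₂Hom, eval₂_C, RingHom.coe_comp, Function.comp_apply, eval₂_X, Fin.cases_zero,
    Fin.cases_succ, Fin.cons_zero, Fin.cons_succ, map_add, map_sum, map_mul, map_pow]
  ring

theorem aeval_diagQuadratic (a : Fin (n + 2) → R) :
    aeval (Pi.single 0 Polynomial.X) (diagQuadratic a) =
      Polynomial.C (a 0) + Polynomial.C (a 1) * Polynomial.X ^ 2 := by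
  simp [diagQuadratic, Fin.sum_univ_succ]

end CommSemiring

theorem diagQuadratic_neg {R : Type*} [CommRing R] {n : ℕ} (a : Fin (n + 1) → R) :
    diagQuadratic (-a) = -diagQuadratic a := by
  simp only [diagQuadratic, Pi.neg_apply, map_neg, neg_mul, Finset.sum_neg_distrib, neg_add]

theorem not_isSquare_diagQuadratic {R : Type*} [CommRing R] [IsDomain R] (h2 : (2 : R) ≠ 0)
    {n : ℕ} {a : Fin (n + 2) → R} (ha : ∀ i, a i ≠ 0) : ¬ IsSquare (diagQuadratic a) :=
  fun ⟨z, hz⟩ => Polynomial.not_isSquare_C_add_C_mul_X_sq h2 (ha 0) (ha 1)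
    ⟨aeval (Pi.single 0 Polynomial.X) z, by rw [← map_mul, ← hz, aeval_diagQuadratic]⟩

/-- As a polynomial in `X 0`, `diagQuadratic a` is a unit times `X² + c`, where `-c` is again a
diagonal quadratic with nonzero coefficients, hence not a square. -/
theorem irreducible_diagQuadratic {F : Type*} [Field F] (h2 : (2 : F) ≠ 0) {n : ℕ}
    {a : Fin (n + 3) → F} (ha : ∀ i, a i ≠ 0) : Irreducible (diagQuadratic a) := by
  set b := (a 1)⁻¹ • a
  have hb : ∀ i, b i ≠ 0 := fun i => mul_ne_zero (inv_ne_zero (ha 1)) (ha i)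
  have hab : diagQuadratic a = C (a 1) * diagQuadratic b := by
    rw [C_mul_diagQuadratic, smul_smul, mul_inv_cancel₀ (ha 1), one_smul]
  rw [hab, irreducible_isUnit_mul ((ha 1).isUnit.map C),
    ← MulEquiv.irreducible_iff (finSuccEquiv F (n + 1)).toMulEquiv]
  change Irreducible (finSuccEquiv F (n + 1) (diagQuadratic b))
  set c := diagQuadratic (Fin.cons (b 0) fun j : Fin (n + 1) => b j.succ.succ)
  have hb1 : b 1 = 1 := inv_mul_cancel₀ (ha 1)
  rw [finSuccEquiv_diagQuadratic, hb1, map_one, map_one, one_mul]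
  have hmonic : (Polynomial.X ^ 2 + Polynomial.C c).Monic := Polynomial.monic_X_pow_add_C c two_ne_zero
  have hdeg : (Polynomial.X ^ 2 + Polynomial.C c).natDegree = 2 := Polynomial.natDegree_X_pow_add_C
  rw [hmonic.irreducible_iff_roots_eq_zero_of_degree_le_three hdeg.ge (by rw [hdeg]; norm_num)]
  refine Multiset.eq_zero_of_forall_notMem fun z hz => ?_
  rw [Polynomial.mem_roots hmonic.ne_zero, Polynomial.IsRoot, Polynomial.eval_add,
    Polynomial.eval_pow, Polynomial.eval_X, Polynomial.eval_C] at hz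
  refine not_isSquare_diagQuadratic h2 (a := -Fin.cons (b 0) fun j : Fin (n + 1) => b j.succ.succ)
    ?_ ⟨z, ?_⟩
  · intro i
    refine Fin.cases ?_ (fun j => ?_) i <;> simp [hb]
  · rw [diagQuadratic_neg, ← sq, eq_neg_of_add_eq_zero_left hz]

end MvPolynomial

theorem exists_linearMap_map_one_eq_zero_map_eq_one {K K' : Type*} [Field K] [Ring K']
    [Algebra K K'] {ρ : K'} (hρ : ρ ∉ Set.range (algebraMap K K')) :
    ∃ l : K' →ₗ[K] K, l 1 = 0 ∧ l ρ = 1 := by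
  have hρ' : ρ ∉ LinearMap.range (Algebra.linearMap K K') := by simpa using hρ
  obtain ⟨l, hlρ, hl⟩ := Submodule.exists_dual_map_eq_bot_of_notMem hρ' inferInstance
  refine ⟨(l ρ)⁻¹ • l, ?_, by simp [hlρ]⟩
  have h1 : l 1 ∈ (LinearMap.range (Algebra.linearMap K K')).map l :=
    Submodule.mem_map_of_mem ⟨1, by simp⟩
  rw [hl, Submodule.mem_bot] at h1
  simp [h1]

namespace MvPolynomial

section MapLinear

variable {σ K K' : Type*} [CommSemiring K] [CommSemiring K'] [Algebra K K']

noncomputable def mapLinear (l : K' →ₗ[K] K) : MvPolynomial σ K' →ₗ[K] MvPolynomial σ K :=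
  (AddMonoidAlgebra.coeffLinearEquiv K).symm.toLinearMap ∘ₗ Finsupp.mapRange.linearMap l ∘ₗ
    (AddMonoidAlgebra.coeffLinearEquiv K).toLinearMap

variable (l : K' →ₗ[K] K)

@[simp]
theorem coeff_mapLinear (M : MvPolynomial σ K') (m : σ →₀ ℕ) :
    coeff m (mapLinear l M) = l (coeff m M) := rfl

theorem mapLinear_C (c : K') : mapLinear l (C c : MvPolynomial σ K') = C (l c) := by
  classical
  ext m
  rw [coeff_mapLinear, coeff_C, coeff_C]
  split_ifs <;> simp

theorem mapLinear_map_mul (p : MvPolynomial σ K) (M : MvPolynomial σ K') :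
    mapLinear l (map (algebraMap K K') p * M) = p * mapLinear l M := by
  classical
  ext m
  simp only [coeff_mapLinear, coeff_mul, map_sum, coeff_map, ← Algebra.smul_def, map_smul,
    smul_eq_mul]

end MapLinear

theorem dvd_of_dvd_sq_sub_C_mul_sq {σ K K' : Type*} [Field K] [CommRing K'] [Algebra K K']
    {u : K} {ρ : K'} (hρ : ρ ^ 2 = algebraMap K K' u) (hρK : ρ ∉ Set.range (algebraMap K K'))
    {f P Q : MvPolynomial σ K} (hf : Prime (map (algebraMap K K') f))
    (h : f ∣ P ^ 2 - C u * Q ^ 2) : f ∣ Q := by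
  obtain ⟨l, hl1, hlρ⟩ := exists_linearMap_map_one_eq_zero_map_eq_one hρK
  let φ := map (σ := σ) (algebraMap K K')
  have descend : ∀ c, φ f ∣ φ P * C 1 + φ Q * C c → f ∣ Q * C (l c) := by
    rintro c ⟨N, hN⟩
    refine ⟨mapLinear l N, ?_⟩
    simpa only [φ, map_add, mapLinear_map_mul, mapLinear_C, hl1, C_0, mul_zero, zero_add] using
      congrArg (mapLinear l) hN
  have hfactor : φ (P ^ 2 - C u * Q ^ 2) =
      (φ P * C 1 + φ Q * C (-ρ)) * (φ P * C 1 + φ Q * C ρ) := by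
    simp only [φ, map_sub, map_mul, map_pow, map_C, ← hρ, C_neg, map_one, mul_one]
    ring
  rcases hf.dvd_or_dvd (hfactor ▸ map_dvd φ h) with h' | h'
  · simpa [hlρ] using descend _ h'
  · simpa [hlρ] using descend _ h'

end MvPolynomial

theorem IsFractionRing.exists_sq_eq_mul_sq {A L : Type*} [CommRing A] [Field L] [Algebra A L]
    [IsFractionRing A L] {w : L} {x : A} (h : w ^ 2 = algebraMap A L x) :
    ∃ r s : A, s ≠ 0 ∧ r ^ 2 = x * s ^ 2 := by
  have := (algebraMap A L).domain_nontrivial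
  obtain ⟨r, s, hs, rfl⟩ := IsFractionRing.div_surjective (A := A) w
  have hs' : algebraMap A L s ≠ 0 := IsFractionRing.to_map_ne_zero_of_mem_nonZeroDivisors hs
  refine ⟨r, s, nonZeroDivisors.ne_zero hs, IsFractionRing.injective A L ?_⟩
  rw [div_pow, div_eq_iff (pow_ne_zero 2 hs')] at h
  simp [h]

theorem exists_not_dvd_dvd_sq_sub_mul_sq {K R L : Type*} [CommRing K] [CommRing R] [Algebra K R]
    {f : R} [Field L] [Algebra (R ⧸ Ideal.span {f}) L] [IsFractionRing (R ⧸ Ideal.span {f}) L]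
    [Algebra K L] [IsScalarTower K (R ⧸ Ideal.span {f}) L] {u : K}
    (h : ∃ w : L, w ^ 2 = algebraMap K L u) :
    ∃ P Q : R, ¬ f ∣ Q ∧ f ∣ P ^ 2 - algebraMap K R u * Q ^ 2 := by
  obtain ⟨w, hw⟩ := h
  rw [IsScalarTower.algebraMap_apply K (R ⧸ Ideal.span {f}) L] at hw
  obtain ⟨r, s, hs, hrs⟩ := IsFractionRing.exists_sq_eq_mul_sq hw
  obtain ⟨P, rfl⟩ := Ideal.Quotient.mk_surjective r
  obtain ⟨Q, rfl⟩ := Ideal.Quotient.mk_surjective s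
  refine ⟨P, Q, ?_, ?_⟩
  · rwa [ne_eq, Ideal.Quotient.eq_zero_iff_mem, Ideal.mem_span_singleton] at hs
  · rw [← Ideal.mem_span_singleton, ← Ideal.Quotient.eq_zero_iff_mem, map_sub, map_mul, map_pow,
      map_pow, Ideal.Quotient.mk_algebraMap, hrs, sub_self]

open MvPolynomial

theorem stmt_1_general (K : Type) [Field K] (hchar : ringChar K ≠ 2)
    (n : ℕ) (hn : 2 ≤ n) (a : Fin (n + 1) → K) (ha : ∀ i, a i ≠ 0)
    (f : MvPolynomial (Fin n) K)
    (hf : f = C (a 0) + ∑ i : Fin n, C (a i.succ) * X i ^ 2)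
    (L : Type) [Field L]
    [Algebra (MvPolynomial (Fin n) K ⧸ Ideal.span {f}) L]
    [IsFractionRing (MvPolynomial (Fin n) K ⧸ Ideal.span {f}) L]
    [Algebra K L] [IsScalarTower K (MvPolynomial (Fin n) K ⧸ Ideal.span {f}) L]
    (u : K)
    (hsq : ∃ w : L, w ^ 2 = algebraMap K L u) :
    ∃ s : K, s ^ 2 = u := by
  obtain ⟨P, Q, hQ, hPQ⟩ := exists_not_dvd_dvd_sq_sub_mul_sq (f := f) hsq
  by_contra! hu
  have : Fact (Irreducible (Polynomial.X ^ 2 - Polynomial.C u)) :=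
    ⟨X_pow_sub_C_irreducible_of_prime Nat.prime_two hu⟩
  let K' := AdjoinRoot (Polynomial.X ^ 2 - Polynomial.C u)
  let ρ : K' := AdjoinRoot.root _
  have hρ : ρ ^ 2 = algebraMap K K' u := root_X_pow_sub_C_pow 2 u
  have hρK : ρ ∉ Set.range (algebraMap K K') := by
    rintro ⟨c, hc⟩
    exact hu c ((algebraMap K K').injective (by rw [map_pow, hc, hρ]))
  have h2 : (2 : K') ≠ 0 := by
    simpa only [map_ofNat, map_zero] using
      (algebraMap K K').injective.ne (Ring.two_ne_zero hchar)
  obtain ⟨m, rfl⟩ : ∃ m, n = m + 2 := ⟨n - 2, by omega⟩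
  have hprime : Prime (map (algebraMap K K') f) := by
    rw [hf, ← diagQuadratic, map_diagQuadratic]
    exact (irreducible_diagQuadratic h2 fun i => by simpa using ha i).prime
  exact hQ (dvd_of_dvd_sq_sub_C_mul_sq hρ hρK hprime hPQ)

/-- Arason, degree 1, forms of rank ≥ 3: Let `K` be a field of characteristic ≠ 2,
`n + 1 ≥ 3`, and `a₀, …, aₙ ∈ K×`. Let `f = a₀ + a₁x₁² + ⋯ + aₙxₙ²` in `n` variables, assume
`(f)` is prime, and let `L` be the fraction field of `K[x₁,…,xₙ]/(f)` (the function field of the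
projective quadric `a₀X₀² + ⋯ + aₙXₙ² = 0`). Then `K×/K×² → L×/L×²` is injective: every
`u ∈ K×` that becomes a square in `L` is already a square in `K`. -/
theorem stmt_1 (K : Type) [Field K] (hchar : ringChar K ≠ 2)
    (n : ℕ) (hn : 2 ≤ n) (a : Fin (n + 1) → K) (ha : ∀ i, a i ≠ 0)
    (f : MvPolynomial (Fin n) K)
    (hf : f = C (a 0) + ∑ i : Fin n, C (a i.succ) * X i ^ 2)
    (hprime : (Ideal.span {f}).IsPrime)
    (L : Type) [Field L]
    [Algebra (MvPolynomial (Fin n) K ⧸ Ideal.span {f}) L]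
    [IsFractionRing (MvPolynomial (Fin n) K ⧸ Ideal.span {f}) L]
    [Algebra K L] [IsScalarTower K (MvPolynomial (Fin n) K ⧸ Ideal.span {f}) L]
    (u : K) (hu : u ≠ 0)
    (hsq : ∃ w : L, w ^ 2 = algebraMap K L u) :
    ∃ s : K, s ^ 2 = u :=
  stmt_1_general K hchar n hn a ha f hf L u hsq
end

section
/- Let K be a field of characteristic different from 2 and let a, b ∈ K×. Let L be the fraction field of K[u, v]/(1 − a u² − b v²) (the function field of the conic ⟨1, −a, −b⟩; assume the ideal is prime, which is automatic by nondegeneracy), and let M be the fraction field of K[u, v, w]/(1 − a u² − b v² + a b w²) (the function field of the quadric surface ⟨1, −a, −b, ab⟩; assume the ideal is prime). Then there is a K-algebra isomorphism between M and the rational function field L(t) in one variable over L. -/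
/-!
Write the quadric as `1 - aU² = b (V² - aW²)`. Over its function field `M` the point
`u = (UV - W) / (V - aUW)`, `v = (V² - aW²) / (V - aUW)` lies on the conic `1 - au² - bv² = 0`;
conversely, over `L(t)`, with `(u, v)` the generic point of the conic, the point
`(U, V, W) = (t, (1 - aut) / (bv), (t - u) / (bv))` lies on the quadric, and the two
substitutions are mutually inverse. The second one is already defined on `C[1/v][t]`, the
coordinate ring of the cylinder over an affine chart of the conic, which embeds into `L(t)` and
maps to `M` through the first substitution. As the composite from the coordinate ring of the
quadric to `M` is the inclusion, the map from that ring to `L(t)` is injective and extends to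
`M → L(t)`. Its image contains `t` and the generic point of the conic, hence all of `L(t)`.
-/

open MvPolynomial

theorem IsFractionRing.exists_comp_eq_of_comp_eq {A R M F : Type*} [CommRing A] [Field R]
    [Algebra A R] [IsFractionRing A R] [Field M] [CommRing F] [Nontrivial F]
    {f : M →+* F} {p : A →+* M} {i : R →+* F}
    (h : f.comp p = i.comp (algebraMap A R)) : ∃ σ : R →+* M, f.comp σ = i := by
  have hp : Function.Injective p := by
    refine Function.Injective.of_comp (f := f) ?_
    rw [← RingHom.coe_comp, h, RingHom.coe_comp]
    exact i.injective.comp (IsFractionRing.injective A R)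
  have : IsDomain A := hp.isDomain p
  refine ⟨IsFractionRing.lift hp, IsLocalization.ringHom_ext (nonZeroDivisors A) ?_⟩
  ext x
  simpa using RingHom.congr_fun h x

theorem RatFunc.surjective_of_comp_eq {A L M : Type*} [CommRing A] [Field L] [Algebra A L]
    [IsFractionRing A L] [Field M] {f : M →+* RatFunc L} {p : A →+* M}
    (h : ∀ y, f (p y) = algebraMap L (RatFunc L) (algebraMap A L y)) {x : M}
    (hx : f x = RatFunc.X) : Function.Surjective f := by
  obtain ⟨σ, hσ⟩ := IsFractionRing.exists_comp_eq_of_comp_eq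
    (f := f) (p := p) (i := algebraMap L (RatFunc L)) (RingHom.ext h)
  have hpoly : f.comp (Polynomial.eval₂RingHom σ x) =
      (RingHom.id _).comp (algebraMap (Polynomial L) (RatFunc L)) := by
    refine Polynomial.ringHom_ext (fun l => ?_) ?_
    · simpa [RatFunc.algebraMap_C] using RingHom.congr_fun hσ l
    · simpa [RatFunc.algebraMap_X] using hx
  obtain ⟨g, hg⟩ := IsFractionRing.exists_comp_eq_of_comp_eq hpoly
  exact fun y => ⟨g y, RingHom.congr_fun hg y⟩

theorem MvPolynomial.not_dvd_of_aeval_eq_zero {σ R E : Type*} [CommRing R] [CommRing E]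
    [Algebra R E] {g p : MvPolynomial σ R} {x : σ → E} (hg : aeval x g = 0)
    (hp : aeval x p ≠ 0) : ¬ g ∣ p := by
  rintro ⟨c, rfl⟩
  simp [hg] at hp

theorem IsLocalization.lift_injective {R S P : Type*} [CommSemiring R] [CommSemiring S]
    [Algebra R S] {M : Submonoid R} [IsLocalization M S] [CommSemiring P] {g : R →+* P}
    (hg : ∀ y : M, IsUnit (g y)) (hinj : Function.Injective g) :
    Function.Injective (IsLocalization.lift hg : S → P) :=
  (IsLocalization.lift_injective_iff hg).mpr fun x y =>
    ⟨fun h => by simpa using congrArg (IsLocalization.lift hg) h, fun h => congrArg _ (hinj h)⟩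

theorem IsLocalization.Away.map_invSelf {R S F G : Type*} [CommSemiring R] [CommSemiring S]
    [Algebra R S] (x : R) [IsLocalization.Away x S] [DivisionSemiring F] [FunLike G S F]
    [RingHomClass G S F] (φ : G) : φ (invSelf x) = (φ (algebraMap R S x))⁻¹ :=
  eq_inv_of_mul_eq_one_right (by rw [← map_mul, mul_invSelf, map_one])

theorem RatFunc.one_sub_C_mul_X_sq_ne_zero {L : Type*} [Field L] (c : L) :
    1 - RatFunc.C c * RatFunc.X ^ 2 ≠ 0 := by
  rw [← RatFunc.algebraMap_C, ← RatFunc.algebraMap_X, ← map_pow, ← map_mul,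
    ← map_one (algebraMap (Polynomial L) (RatFunc L)), ← map_sub]
  refine (map_ne_zero_iff _ (IsFractionRing.injective _ _)).mpr fun h => ?_
  simpa using congrArg (Polynomial.eval 0) h

section GenericPoint

variable {σ R F : Type*} [CommRing R] (g : MvPolynomial σ R) [CommRing F]
  [Algebra (MvPolynomial σ R ⧸ Ideal.span {g}) F] [Algebra R F]
  [IsScalarTower R (MvPolynomial σ R ⧸ Ideal.span {g}) F]

noncomputable def genericZero (i : σ) : F :=
  algebraMap _ F (Ideal.Quotient.mk (Ideal.span {g}) (X i))

theorem aeval_genericZero (p : MvPolynomial σ R) :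
    aeval (genericZero g : σ → F) p = algebraMap _ F (Ideal.Quotient.mk (Ideal.span {g}) p) := by
  have : aeval (genericZero g : σ → F) =
      (IsScalarTower.toAlgHom R _ F).comp (Ideal.Quotient.mkₐ R (Ideal.span {g})) :=
    algHom_ext fun _ => by simp [genericZero]
  rw [this]
  rfl

theorem aeval_genericZero_self : aeval (genericZero g : σ → F) g = 0 := by
  rw [aeval_genericZero, Ideal.Quotient.eq_zero_iff_mem.mpr (Ideal.mem_span_singleton_self g),
    map_zero]

theorem aeval_genericZero_eq_zero_iff [IsFractionRing (MvPolynomial σ R ⧸ Ideal.span {g}) F]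
    {p : MvPolynomial σ R} : aeval (genericZero g : σ → F) p = 0 ↔ g ∣ p := by
  rw [aeval_genericZero, IsFractionRing.to_map_eq_zero_iff, Ideal.Quotient.eq_zero_iff_mem,
    Ideal.mem_span_singleton]

variable {S : Type*} [CommRing S] [Algebra R S]

noncomputable def aevalQuotient (x : σ → S) (hx : aeval x g = 0) :
    (MvPolynomial σ R ⧸ Ideal.span {g}) →ₐ[R] S :=
  Ideal.Quotient.liftₐ _ (aeval x) fun p hp => by
    obtain ⟨q, rfl⟩ := Ideal.mem_span_singleton'.mp hp
    simp [hx]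

@[simp]
theorem aevalQuotient_mk (x : σ → S) (hx : aeval x g = 0) (p : MvPolynomial σ R) :
    aevalQuotient g x hx (Ideal.Quotient.mk _ p) = aeval x p :=
  rfl

end GenericPoint

section Parametrization

variable {R F : Type*} [CommRing R] [Field F]

def conicOfQuadric (a U V W : F) : Fin 2 → F :=
  ![(U * V - W) / (V - a * U * W), (V ^ 2 - a * W ^ 2) / (V - a * U * W)]

-- `c` stands for `(b v)⁻¹`, so that the map makes sense where only `b v` is inverted.
def quadricOfConic (a u T c : R) : Fin 3 → R :=
  ![T, (1 - a * u * T) * c, (T - u) * c]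

theorem quadricOfConic_map {S G : Type*} [CommRing S] [FunLike G R S] [RingHomClass G R S]
    (φ : G) (a u T c : R) :
    φ ∘ quadricOfConic a u T c = quadricOfConic (φ a) (φ u) (φ T) (φ c) := by
  ext i
  fin_cases i <;> simp [quadricOfConic]

theorem conicOfQuadric_map {E G : Type*} [Field E] [FunLike G F E] [RingHomClass G F E] (φ : G)
    (a U V W : F) :
    φ ∘ conicOfQuadric a U V W = conicOfQuadric (φ a) (φ U) (φ V) (φ W) := by
  ext i
  fin_cases i <;> simp [conicOfQuadric]

theorem quadricOfConic_mem {a b u v c T : R} (hc : 1 - a * u ^ 2 - b * v ^ 2 = 0)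
    (hvc : b * v * c = 1) :
    1 - a * quadricOfConic a u T c 0 ^ 2 - b * quadricOfConic a u T c 1 ^ 2 +
      a * b * quadricOfConic a u T c 2 ^ 2 = 0 := by
  simp only [quadricOfConic, Matrix.cons_val_zero, Matrix.cons_val_one, Matrix.cons_val]
  linear_combination (-(1 - a * T ^ 2) * b * c ^ 2) * hc - (1 - a * T ^ 2) * (1 + b * v * c) * hvc

variable {a b : F}

theorem mul_conicOfQuadric_one {U V W : F} (hQ : 1 - a * U ^ 2 - b * V ^ 2 + a * b * W ^ 2 = 0) :
    b * conicOfQuadric a U V W 1 = (1 - a * U ^ 2) / (V - a * U * W) := by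
  rw [conicOfQuadric, Matrix.cons_val_one, Matrix.cons_val_fin_one, ← mul_div_assoc]
  congr 1
  linear_combination -hQ

theorem conicOfQuadric_mem {U V W : F} (hQ : 1 - a * U ^ 2 - b * V ^ 2 + a * b * W ^ 2 = 0)
    (hd : V - a * U * W ≠ 0) :
    1 - a * conicOfQuadric a U V W 0 ^ 2 - b * conicOfQuadric a U V W 1 ^ 2 = 0 := by
  simp only [conicOfQuadric, Matrix.cons_val_zero, Matrix.cons_val_one, Matrix.cons_val_fin_one]
  field_simp
  linear_combination (V ^ 2 - a * W ^ 2) * hQ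

theorem quadricOfConic_conicOfQuadric {U V W : F}
    (hQ : 1 - a * U ^ 2 - b * V ^ 2 + a * b * W ^ 2 = 0) (hd : V - a * U * W ≠ 0)
    (hn : 1 - a * U ^ 2 ≠ 0) :
    quadricOfConic a (conicOfQuadric a U V W 0) U (b * conicOfQuadric a U V W 1)⁻¹ =
      ![U, V, W] := by
  rw [mul_conicOfQuadric_one hQ, inv_div]
  simp only [quadricOfConic, conicOfQuadric, Matrix.cons_val_zero]
  refine Matrix.vec3_eq rfl ?_ ?_ <;> rw [mul_div_assoc', div_eq_iff hn]
  · field_simp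
    ring
  · rw [sub_mul, div_mul_cancel₀ _ hd]
    ring

theorem conicOfQuadric_quadricOfConic {u v : F} (hc : 1 - a * u ^ 2 - b * v ^ 2 = 0)
    (hb : b ≠ 0) (hv : v ≠ 0) {T : F} (hT : 1 - a * T ^ 2 ≠ 0) :
    conicOfQuadric a (quadricOfConic a u T (b * v)⁻¹ 0) (quadricOfConic a u T (b * v)⁻¹ 1)
      (quadricOfConic a u T (b * v)⁻¹ 2) = ![u, v] := by
  simp only [quadricOfConic, conicOfQuadric, Matrix.cons_val_zero, Matrix.cons_val_one,
    Matrix.cons_val]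
  have hden : (1 - a * u * T) * (b * v)⁻¹ - a * T * ((T - u) * (b * v)⁻¹) =
      (1 - a * T ^ 2) / (b * v) := by ring
  rw [hden]
  refine Matrix.vec2_eq ?_ ?_ <;> rw [div_eq_iff (div_ne_zero hT (mul_ne_zero hb hv))]
  · ring
  · field_simp
    linear_combination (1 - a * T ^ 2) * hc

end Parametrization

section ConicAndQuadric

variable {K : Type*} [Field K] {a b : K}

noncomputable abbrev conicPoly (a b : K) : MvPolynomial (Fin 2) K :=
  1 - C a * X 0 ^ 2 - C b * X 1 ^ 2

noncomputable abbrev quadricPoly (a b : K) : MvPolynomial (Fin 3) K :=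
  1 - C a * X 0 ^ 2 - C b * X 1 ^ 2 + C (a * b) * X 2 ^ 2

abbrev ConicRing (a b : K) : Type _ := MvPolynomial (Fin 2) K ⧸ Ideal.span {conicPoly a b}

abbrev QuadricRing (a b : K) : Type _ := MvPolynomial (Fin 3) K ⧸ Ideal.span {quadricPoly a b}

theorem aeval_conicPoly {S : Type*} [CommRing S] [Algebra K S] (x : Fin 2 → S) :
    aeval x (conicPoly a b) = 1 - algebraMap K S a * x 0 ^ 2 - algebraMap K S b * x 1 ^ 2 := by
  simp

theorem aeval_quadricPoly {S : Type*} [CommRing S] [Algebra K S] (x : Fin 3 → S) :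
    aeval x (quadricPoly a b) = 1 - algebraMap K S a * x 0 ^ 2 - algebraMap K S b * x 1 ^ 2 +
      algebraMap K S a * algebraMap K S b * x 2 ^ 2 := by
  simp

theorem exists_mul_sq_eq_one (hb : b ≠ 0) :
    ∃ r : AlgebraicClosure K, algebraMap K _ b * r ^ 2 = 1 := by
  obtain ⟨r, hr⟩ :=
    IsAlgClosed.exists_pow_nat_eq (algebraMap K (AlgebraicClosure K) b)⁻¹ two_pos
  exact ⟨r, by rw [hr, mul_inv_cancel₀ (by simpa using hb)]⟩

-- Witnessed at the point `u = 0`, `v = 1 / √b` (and `w = 0` on the quadric).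
theorem conicPoly_not_dvd_X_one (hb : b ≠ 0) : ¬ conicPoly a b ∣ X 1 := by
  obtain ⟨r, hr⟩ := exists_mul_sq_eq_one hb
  refine not_dvd_of_aeval_eq_zero (x := ![0, r]) ?_ ?_
  · simp [hr]
  · simpa using right_ne_zero_of_mul_eq_one hr

theorem quadricPoly_not_dvd_one_sub (hb : b ≠ 0) : ¬ quadricPoly a b ∣ 1 - C a * X 0 ^ 2 := by
  obtain ⟨r, hr⟩ := exists_mul_sq_eq_one hb
  refine not_dvd_of_aeval_eq_zero (x := ![0, r, 0]) ?_ ?_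
  · simp [hr]
  · simp

theorem quadricPoly_not_dvd_X_one_sub (hb : b ≠ 0) :
    ¬ quadricPoly a b ∣ X 1 - C a * X 0 * X 2 := by
  obtain ⟨r, hr⟩ := exists_mul_sq_eq_one hb
  refine not_dvd_of_aeval_eq_zero (x := ![0, r, 0]) ?_ ?_
  · simp [hr]
  · simpa using right_ne_zero_of_mul_eq_one hr

end ConicAndQuadric

section FunctionFields

variable {K : Type*} [Field K] (a b : K)

noncomputable def conicDenom : ConicRing a b := Ideal.Quotient.mk _ (C b * X 1)

-- The affine chart `v ≠ 0` of the conic.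
abbrev ConicChart : Type _ := Localization.Away (conicDenom a b)

theorem mul_genericZero_conicPoly_one {S : Type*} [CommRing S] [Algebra (ConicRing a b) S]
    [Algebra K S] [IsScalarTower K (ConicRing a b) S] :
    algebraMap K S b * genericZero (conicPoly a b) 1 = algebraMap _ S (conicDenom a b) := by
  rw [conicDenom, ← aeval_genericZero]
  simp

noncomputable def quadricToCylinder : QuadricRing a b →ₐ[K] Polynomial (ConicChart a b) :=
  aevalQuotient _ (quadricOfConic (algebraMap K _ a) (genericZero (conicPoly a b) 0) Polynomial.X
      (Polynomial.C (IsLocalization.Away.invSelf (conicDenom a b)))) (by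
    rw [aeval_quadricPoly]
    refine quadricOfConic_mem (v := genericZero (conicPoly a b) 1) ?_ ?_
    · rw [← aeval_conicPoly, aeval_genericZero_self]
    · rw [mul_genericZero_conicPoly_one a b, Polynomial.algebraMap_apply, ← Polynomial.C_mul,
        IsLocalization.Away.mul_invSelf, Polynomial.C_1])

section ConicSide

variable (L : Type*) [Field L] [Algebra (ConicRing a b) L] [IsFractionRing (ConicRing a b) L]
  [Algebra K L] [IsScalarTower K (ConicRing a b) L]

theorem genericZero_conicPoly_one_ne_zero (hb : b ≠ 0) :
    (genericZero (conicPoly a b) 1 : L) ≠ 0 := by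
  simpa using (aeval_genericZero_eq_zero_iff (F := L) _).not.mpr (conicPoly_not_dvd_X_one hb)

theorem algebraMap_conicDenom_ne_zero (hb : b ≠ 0) : algebraMap _ L (conicDenom a b) ≠ 0 := by
  rw [← mul_genericZero_conicPoly_one a b]
  exact mul_ne_zero (by simpa using hb) (genericZero_conicPoly_one_ne_zero a b L hb)

noncomputable def conicChartToField (hb : b ≠ 0) : ConicChart a b →ₐ[K] L :=
  IsLocalization.Away.liftAlgHom (conicDenom a b) (f := IsScalarTower.toAlgHom K _ L)
    (isUnit_iff_ne_zero.mpr (algebraMap_conicDenom_ne_zero a b L hb))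

noncomputable def cylinderToRatFunc (hb : b ≠ 0) :
    Polynomial (ConicChart a b) →ₐ[K] RatFunc L :=
  (IsScalarTower.toAlgHom K (Polynomial L) (RatFunc L)).comp
    (Polynomial.mapAlgHom (conicChartToField a b L hb))

theorem cylinderToRatFunc_injective (hb : b ≠ 0) :
    Function.Injective (cylinderToRatFunc a b L hb) :=
  (IsFractionRing.injective (Polynomial L) (RatFunc L)).comp <| Polynomial.map_injective _ <|
    IsLocalization.lift_injective _ (IsFractionRing.injective (ConicRing a b) L)

theorem cylinderToRatFunc_C (hb : b ≠ 0) (y : ConicChart a b) :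
    cylinderToRatFunc a b L hb (Polynomial.C y) =
      algebraMap L (RatFunc L) (conicChartToField a b L hb y) := by
  simp [cylinderToRatFunc, RatFunc.algebraMap_eq_C]

theorem cylinderToRatFunc_genericZero (hb : b ≠ 0) (i : Fin 2) :
    cylinderToRatFunc a b L hb (genericZero (conicPoly a b) i) =
      algebraMap L (RatFunc L) (genericZero (conicPoly a b) i) := by
  rw [genericZero, Polynomial.algebraMap_apply, cylinderToRatFunc_C]
  simp [conicChartToField, genericZero]

theorem cylinderToRatFunc_C_invSelf (hb : b ≠ 0) :
    cylinderToRatFunc a b L hb (Polynomial.C (IsLocalization.Away.invSelf (conicDenom a b))) =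
      (algebraMap K _ b * algebraMap L (RatFunc L) (genericZero (conicPoly a b) 1))⁻¹ := by
  rw [cylinderToRatFunc_C, conicChartToField, IsLocalization.Away.map_invSelf,
    IsLocalization.Away.liftAlgHom_apply, IsLocalization.Away.lift_eq, AlgHom.toRingHom_eq_coe,
    RingHom.coe_coe, IsScalarTower.coe_toAlgHom', ← mul_genericZero_conicPoly_one, map_inv₀,
    map_mul, ← IsScalarTower.algebraMap_apply]

theorem cylinderToRatFunc_X (hb : b ≠ 0) :
    cylinderToRatFunc a b L hb Polynomial.X = RatFunc.X := by
  simp [cylinderToRatFunc]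

end ConicSide

section QuadricSide

variable (M : Type*) [Field M] [Algebra (QuadricRing a b) M] [Algebra K M]
  [IsScalarTower K (QuadricRing a b) M]

theorem genericZero_quadric_eq_zero :
    let P : Fin 3 → M := genericZero (quadricPoly a b)
    1 - algebraMap K M a * P 0 ^ 2 - algebraMap K M b * P 1 ^ 2 +
      algebraMap K M a * algebraMap K M b * P 2 ^ 2 = 0 := by
  intro P
  rw [← aeval_quadricPoly, aeval_genericZero_self]

variable [IsFractionRing (QuadricRing a b) M]

theorem genericZero_quadricPoly_one_sub_ne_zero (hb : b ≠ 0) :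
    let P : Fin 3 → M := genericZero (quadricPoly a b)
    1 - algebraMap K M a * P 0 ^ 2 ≠ 0 := by
  simpa using (aeval_genericZero_eq_zero_iff (F := M) _).not.mpr (quadricPoly_not_dvd_one_sub hb)

theorem genericZero_quadricPoly_denom_ne_zero (hb : b ≠ 0) :
    let P : Fin 3 → M := genericZero (quadricPoly a b)
    P 1 - algebraMap K M a * P 0 * P 2 ≠ 0 := by
  simpa using (aeval_genericZero_eq_zero_iff (F := M) _).not.mpr
    (quadricPoly_not_dvd_X_one_sub hb)

noncomputable def quadricFieldConicPoint (hb : b ≠ 0) : ConicRing a b →ₐ[K] M :=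
  let P : Fin 3 → M := genericZero (quadricPoly a b)
  aevalQuotient _ (conicOfQuadric (algebraMap K M a) (P 0) (P 1) (P 2)) (by
    rw [aeval_conicPoly]
    exact conicOfQuadric_mem (genericZero_quadric_eq_zero a b M)
      (genericZero_quadricPoly_denom_ne_zero a b M hb))

theorem quadricFieldConicPoint_conicDenom_ne_zero (hb : b ≠ 0) :
    quadricFieldConicPoint a b M hb (conicDenom a b) ≠ 0 := by
  rw [conicDenom, quadricFieldConicPoint, aevalQuotient_mk]
  simp only [map_mul, aeval_C, aeval_X]
  rw [mul_conicOfQuadric_one (genericZero_quadric_eq_zero a b M)]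
  exact div_ne_zero (genericZero_quadricPoly_one_sub_ne_zero a b M hb)
    (genericZero_quadricPoly_denom_ne_zero a b M hb)

noncomputable def cylinderToQuadricField (hb : b ≠ 0) : Polynomial (ConicChart a b) →ₐ[K] M :=
  Polynomial.aevalTower (IsLocalization.Away.liftAlgHom (conicDenom a b)
    (isUnit_iff_ne_zero.mpr (quadricFieldConicPoint_conicDenom_ne_zero a b M hb)))
    (genericZero (quadricPoly a b) 0)

theorem cylinderToQuadricField_genericZero (hb : b ≠ 0) (i : Fin 2) :
    let P : Fin 3 → M := genericZero (quadricPoly a b)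
    cylinderToQuadricField a b M hb (genericZero (conicPoly a b) i) =
      conicOfQuadric (algebraMap K M a) (P 0) (P 1) (P 2) i := by
  simp [cylinderToQuadricField, genericZero, Polynomial.algebraMap_apply, quadricFieldConicPoint]

theorem cylinderToQuadricField_C_invSelf (hb : b ≠ 0) :
    let P : Fin 3 → M := genericZero (quadricPoly a b)
    cylinderToQuadricField a b M hb (Polynomial.C (IsLocalization.Away.invSelf (conicDenom a b))) =
      (algebraMap K M b * conicOfQuadric (algebraMap K M a) (P 0) (P 1) (P 2) 1)⁻¹ := by
  rw [cylinderToQuadricField, Polynomial.aevalTower_C, IsLocalization.Away.map_invSelf,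
    IsLocalization.Away.liftAlgHom_apply, IsLocalization.Away.lift_eq]
  simp [conicDenom, quadricFieldConicPoint]

theorem cylinderToQuadricField_comp_quadricToCylinder (hb : b ≠ 0) :
    (cylinderToQuadricField a b M hb).comp (quadricToCylinder a b) =
      IsScalarTower.toAlgHom K _ M := by
  refine Ideal.Quotient.algHom_ext _ (MvPolynomial.algHom_ext fun i => ?_)
  change _ = genericZero (quadricPoly a b) i
  have hX : cylinderToQuadricField a b M hb Polynomial.X = genericZero (quadricPoly a b) 0 :=
    Polynomial.aevalTower_X _ _
  rw [AlgHom.comp_apply, Ideal.Quotient.mkₐ_eq_mk, AlgHom.comp_apply, quadricToCylinder,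
    aevalQuotient_mk, aeval_X,
    ← Function.comp_apply (f := cylinderToQuadricField a b M hb), quadricOfConic_map,
    AlgHom.commutes, cylinderToQuadricField_genericZero, hX, cylinderToQuadricField_C_invSelf,
    quadricOfConic_conicOfQuadric (genericZero_quadric_eq_zero a b M)
      (genericZero_quadricPoly_denom_ne_zero a b M hb)
      (genericZero_quadricPoly_one_sub_ne_zero a b M hb)]
  fin_cases i <;> rfl

end QuadricSide

variable (L : Type*) [Field L] [Algebra (ConicRing a b) L] [IsFractionRing (ConicRing a b) L]
  [Algebra K L] [IsScalarTower K (ConicRing a b) L]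
variable (M : Type*) [Field M] [Algebra (QuadricRing a b) M] [IsFractionRing (QuadricRing a b) M]
  [Algebra K M] [IsScalarTower K (QuadricRing a b) M]

noncomputable def quadricToRatFunc (hb : b ≠ 0) : QuadricRing a b →ₐ[K] RatFunc L :=
  (cylinderToRatFunc a b L hb).comp (quadricToCylinder a b)

variable [IsDomain (QuadricRing a b)]

theorem quadricToCylinder_injective (hb : b ≠ 0) :
    Function.Injective (quadricToCylinder a b) := by
  refine Function.Injective.of_comp
    (f := cylinderToQuadricField a b (FractionRing (QuadricRing a b)) hb) ?_
  rw [← AlgHom.coe_comp, cylinderToQuadricField_comp_quadricToCylinder]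
  exact IsFractionRing.injective _ _

theorem quadricToRatFunc_injective (hb : b ≠ 0) :
    Function.Injective (quadricToRatFunc a b L hb) :=
  (cylinderToRatFunc_injective a b L hb).comp (quadricToCylinder_injective a b hb)

noncomputable def quadricFieldToRatFunc (hb : b ≠ 0) : M →ₐ[K] RatFunc L :=
  IsFractionRing.liftAlgHom (quadricToRatFunc_injective a b L hb)

theorem quadricFieldToRatFunc_algebraMap (hb : b ≠ 0) (x : QuadricRing a b) :
    quadricFieldToRatFunc a b L M hb (algebraMap _ M x) = quadricToRatFunc a b L hb x :=
  IsFractionRing.lift_algebraMap (quadricToRatFunc_injective a b L hb) x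

theorem quadricFieldToRatFunc_genericZero (hb : b ≠ 0) :
    quadricFieldToRatFunc a b L M hb ∘ genericZero (quadricPoly a b) =
      quadricOfConic (algebraMap K _ a) (algebraMap L (RatFunc L) (genericZero (conicPoly a b) 0))
        RatFunc.X
        (algebraMap K _ b * algebraMap L (RatFunc L) (genericZero (conicPoly a b) 1))⁻¹ := by
  ext i
  rw [Function.comp_apply, genericZero, quadricFieldToRatFunc_algebraMap, quadricToRatFunc,
    AlgHom.comp_apply, quadricToCylinder, aevalQuotient_mk, aeval_X,
    ← Function.comp_apply (f := cylinderToRatFunc a b L hb), quadricOfConic_map, AlgHom.commutes,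
    cylinderToRatFunc_genericZero, cylinderToRatFunc_X, cylinderToRatFunc_C_invSelf]

theorem quadricFieldToRatFunc_comp_quadricFieldConicPoint (hb : b ≠ 0) :
    (quadricFieldToRatFunc a b L M hb).comp (quadricFieldConicPoint a b M hb) =
      (IsScalarTower.toAlgHom K L (RatFunc L)).comp (IsScalarTower.toAlgHom K _ L) := by
  have hc := congrArg (algebraMap L (RatFunc L)) (aeval_genericZero_self (F := L) (conicPoly a b))
  rw [aeval_conicPoly] at hc
  simp only [map_sub, map_mul, map_pow, map_one, map_zero, ← IsScalarTower.algebraMap_apply] at hc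
  have hv := (map_ne_zero (algebraMap L (RatFunc L))).mpr
    (genericZero_conicPoly_one_ne_zero a b L hb)
  have hb' : algebraMap K (RatFunc L) b ≠ 0 := by simpa using hb
  have hT : 1 - algebraMap K (RatFunc L) a * RatFunc.X ^ 2 ≠ 0 := by
    rw [IsScalarTower.algebraMap_apply K L, RatFunc.algebraMap_eq_C]
    exact RatFunc.one_sub_C_mul_X_sq_ne_zero _
  refine Ideal.Quotient.algHom_ext _ (MvPolynomial.algHom_ext fun i => ?_)
  have hP := quadricFieldToRatFunc_genericZero a b L M hb
  rw [AlgHom.comp_apply, Ideal.Quotient.mkₐ_eq_mk, AlgHom.comp_apply, quadricFieldConicPoint,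
    aevalQuotient_mk, aeval_X, ← Function.comp_apply (f := quadricFieldToRatFunc a b L M hb),
    conicOfQuadric_map, AlgHom.commutes]
  simp only [← Function.comp_apply (f := quadricFieldToRatFunc a b L M hb) (g := genericZero _),
    hP]
  rw [conicOfQuadric_quadricOfConic hc hb' hv hT]
  fin_cases i <;> rfl

end FunctionFields

theorem stmt_4_general (K : Type) [Field K]
    (a b : K) (hb : b ≠ 0)
    (g₁ : MvPolynomial (Fin 2) K)
    (hg₁ : g₁ = 1 - C a * X 0 ^ 2 - C b * X 1 ^ 2)
    (g₂ : MvPolynomial (Fin 3) K)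
    (hg₂ : g₂ = 1 - C a * X 0 ^ 2 - C b * X 1 ^ 2 + C (a * b) * X 2 ^ 2)
    (L : Type) [Field L]
    [Algebra (MvPolynomial (Fin 2) K ⧸ Ideal.span {g₁}) L]
    [IsFractionRing (MvPolynomial (Fin 2) K ⧸ Ideal.span {g₁}) L]
    [Algebra K L] [IsScalarTower K (MvPolynomial (Fin 2) K ⧸ Ideal.span {g₁}) L]
    (M : Type) [Field M]
    [Algebra (MvPolynomial (Fin 3) K ⧸ Ideal.span {g₂}) M]
    [IsFractionRing (MvPolynomial (Fin 3) K ⧸ Ideal.span {g₂}) M]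
    [Algebra K M] [IsScalarTower K (MvPolynomial (Fin 3) K ⧸ Ideal.span {g₂}) M] :
    Nonempty (M ≃ₐ[K] RatFunc L) := by
  subst hg₁ hg₂
  have : IsDomain (QuadricRing a b) := (IsFractionRing.injective _ M).isDomain _
  let f := quadricFieldToRatFunc a b L M hb
  have hsurj : Function.Surjective f :=
    RatFunc.surjective_of_comp_eq (f := f.toRingHom)
      (p := (quadricFieldConicPoint a b M hb).toRingHom)
      (AlgHom.congr_fun (quadricFieldToRatFunc_comp_quadricFieldConicPoint a b L M hb))
      (congrFun (quadricFieldToRatFunc_genericZero a b L M hb) 0)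
  exact ⟨AlgEquiv.ofBijective f ⟨f.toRingHom.injective, hsurj⟩⟩

/-- quadric surface with square discriminant over the function field of the conic:
Let `K` be a field of characteristic ≠ 2 and `a, b ∈ K×`. Let `L` be the function field of the
conic `1 - a u² - b v² = 0` and `M` the function field of the quadric surface
`1 - a u² - b v² + a b w² = 0` (Pfister form `⟨1,-a,-b,ab⟩`, square discriminant). Then `M` is
`K`-isomorphic to the rational function field `L(t)` in one variable over `L`. -/
theorem stmt_4 (K : Type) [Field K] (hchar : ringChar K ≠ 2)
    (a b : K) (ha : a ≠ 0) (hb : b ≠ 0)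
    (g₁ : MvPolynomial (Fin 2) K)
    (hg₁ : g₁ = 1 - C a * X 0 ^ 2 - C b * X 1 ^ 2)
    (hprime₁ : (Ideal.span {g₁}).IsPrime)
    (g₂ : MvPolynomial (Fin 3) K)
    (hg₂ : g₂ = 1 - C a * X 0 ^ 2 - C b * X 1 ^ 2 + C (a * b) * X 2 ^ 2)
    (hprime₂ : (Ideal.span {g₂}).IsPrime)
    (L : Type) [Field L]
    [Algebra (MvPolynomial (Fin 2) K ⧸ Ideal.span {g₁}) L]
    [IsFractionRing (MvPolynomial (Fin 2) K ⧸ Ideal.span {g₁}) L]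
    [Algebra K L] [IsScalarTower K (MvPolynomial (Fin 2) K ⧸ Ideal.span {g₁}) L]
    (M : Type) [Field M]
    [Algebra (MvPolynomial (Fin 3) K ⧸ Ideal.span {g₂}) M]
    [IsFractionRing (MvPolynomial (Fin 3) K ⧸ Ideal.span {g₂}) M]
    [Algebra K M] [IsScalarTower K (MvPolynomial (Fin 3) K ⧸ Ideal.span {g₂}) M] :
    Nonempty (M ≃ₐ[K] RatFunc L) :=
  stmt_4_general K a b hb g₁ hg₁ g₂ hg₂ L M
end
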